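/- arXiv:1307.7098 — 4 statements merged into one kernel-verified Lean document; each statement's English description precedes it below -/
import Mathlib

section
/- For any integer t > 1 and any set {c₁, …, c_t} of distinct nonzero elements of C, the elements e(c₁), …, e(c_t) — more precisely, their images under the natural map Ĉ → ℚ ⊗_ℤ Ĉ — are linearly independent over ℚ. -/
/-! Choose a functional `f : C →ₗ[ℤ] ℤ` that is injective on `{c₁, …, c_t}`. Reading the
degree-`n` component of `Ĉ` through `f ^ ⊗ n` gives functionals `Ĉ → ℤ` sending `e(c)` to
`f(c) ^ n`; the first `t` of them map the `e(cᵢ)` to the rows of the Vandermonde matrix of the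
distinct numbers `f(cᵢ)`, which are linearly independent over `ℚ`. -/

open scoped TensorProduct

/-- `Ĉ = ℤ ⊕ ∏_{i=1}^∞ C^{⊗i}`, where `C^{⊗i}` is the `i`-fold tensor power over `ℤ`. -/
abbrev Chat (C : Type) [AddCommGroup C] [Module ℤ C] : Type :=
  ℤ × Π i : ℕ+, TensorPower ℤ (i : ℕ) C

/-- `e : C → Ĉ`, sending `c` to `(1, c, c ⊗ c, c ⊗ c ⊗ c, …)`. -/
noncomputable def eMap (C : Type) [AddCommGroup C] [Module ℤ C] (c : C) : Chat C :=
  (1, fun i => PiTensorProduct.tprod ℤ (fun _ : Fin (i : ℕ) => c))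

namespace Module.Projective

variable {R M : Type*} [CommRing R] [IsDomain R] [Infinite R] [AddCommGroup M] [Module R M]
  [Projective R M]

/-- The kernels of the evaluations `φ ↦ φ (v i)` have infinite index in `Dual R M`, and by
B. H. Neumann's lemma finitely many subgroups of infinite index never cover a group. -/
theorem exists_dual_forall_apply_ne_zero {ι : Type*} [Finite ι] (v : ι → M)
    (hv : ∀ i, v i ≠ 0) : ∃ f : Dual R M, ∀ i, f (v i) ≠ 0 := by
  have := Fintype.ofFinite ι
  by_contra! hcover
  have hunion : ⋃ i ∈ Finset.univ,
      ((LinearMap.ker (Dual.eval R M (v i)) : Submodule R (Dual R M)) : Set (Dual R M)) =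
        Set.univ := by
    ext f
    simpa using hcover f
  obtain ⟨i, -, hfin⟩ := Submodule.exists_finiteIndex_of_cover hunion
  obtain ⟨φ, hφ⟩ := exists_dual_ne_zero R (hv i)
  have : Infinite (Dual.eval R M (v i)).toAddMonoidHom.range :=
    Infinite.of_injective (fun r => ⟨r * φ (v i), r • φ, by simp⟩)
      fun r r' h => mul_left_injective₀ hφ (congrArg Subtype.val h)
  apply hfin.index_ne_zero
  rw [LinearMap.ker_toAddSubgroup, AddSubgroup.index_ker, Nat.card_eq_zero_of_infinite]

theorem exists_dual_injective_comp {ι : Type*} [Finite ι] {v : ι → M}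
    (hv : Function.Injective v) : ∃ f : Dual R M, Function.Injective (f ∘ v) := by
  obtain ⟨f, hf⟩ := exists_dual_forall_apply_ne_zero (R := R)
    (fun p : {p : ι × ι // p.1 ≠ p.2} => v p.1.1 - v p.1.2)
    fun p => sub_ne_zero.mpr (hv.ne p.2)
  refine ⟨f, fun i j hij => by_contra fun hne => hf ⟨(i, j), hne⟩ ?_⟩
  simpa [sub_eq_zero] using hij

end Module.Projective

namespace Chat

variable {C : Type} [AddCommGroup C] [Module ℤ C]

noncomputable def powerEval (f : Module.Dual ℤ C) : ℕ → Chat C →ₗ[ℤ] ℤ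
  | 0 => LinearMap.fst ℤ ℤ _
  | n + 1 => PiTensorProduct.dualDistrib (PiTensorProduct.tprod ℤ fun _ : Fin n.succPNat => f) ∘ₗ
      LinearMap.proj n.succPNat ∘ₗ LinearMap.snd ℤ ℤ _

theorem powerEval_eMap (f : Module.Dual ℤ C) (n : ℕ) (x : C) :
    powerEval f n (eMap C x) = f x ^ n := by
  cases n with
  | zero => simp [powerEval, eMap]
  | succ n =>
    simp only [powerEval, eMap, LinearMap.comp_apply, LinearMap.snd_apply, LinearMap.proj_apply,
      PiTensorProduct.dualDistrib_apply]
    rw [Finset.prod_const, Finset.card_univ, Fintype.card_fin, Nat.succPNat_coe]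

end Chat

theorem stmt0_general (C : Type) [AddCommGroup C] [Module ℤ C] [Module.Free ℤ C]
    (t : ℕ) (c : Fin t → C)
    (hdist : Function.Injective c) :
    LinearIndependent ℚ
      (fun i : Fin t => ((1 : ℚ) ⊗ₜ[ℤ] eMap C (c i) : ℚ ⊗[ℤ] Chat C)) := by
  obtain ⟨f, hf⟩ := Module.Projective.exists_dual_injective_comp (R := ℤ) hdist
  have hvandermonde : LinearIndependent ℚ (Matrix.vandermonde fun i => (f (c i) : ℚ)) :=
    Matrix.linearIndependent_rows_of_det_ne_zero
      (Matrix.det_vandermonde_ne_zero_iff.mpr (Int.cast_injective.comp hf))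
  let Φ : ℚ ⊗[ℤ] Chat C →ₗ[ℚ] Fin t → ℚ := LinearMap.liftBaseChange ℚ
    (LinearMap.pi fun j : Fin t => Algebra.linearMap ℤ ℚ ∘ₗ Chat.powerEval f j)
  have hΦ : Φ ∘ (fun i => (1 : ℚ) ⊗ₜ[ℤ] eMap C (c i)) =
      Matrix.vandermonde fun i => (f (c i) : ℚ) := by
    funext i j
    simp [Φ, Chat.powerEval_eMap]
  exact .of_comp Φ (hΦ ▸ hvandermonde)

/-- For any integer `t > 1` and any set `{c₁, …, c_t}` of distinct nonzero elements of a free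
abelian group `C`, the images of `e(c₁), …, e(c_t)` under the natural map `Ĉ → ℚ ⊗_ℤ Ĉ` are
linearly independent over `ℚ`. -/
theorem stmt0 (C : Type) [AddCommGroup C] [Module ℤ C] [Module.Free ℤ C]
    (t : ℕ) (ht : 1 < t) (c : Fin t → C)
    (hdist : Function.Injective c) (hne : ∀ i, c i ≠ 0) :
    LinearIndependent ℚ
      (fun i : Fin t => ((1 : ℚ) ⊗ₜ[ℤ] eMap C (c i) : ℚ ⊗[ℤ] Chat C)) :=
  stmt0_general C t c hdist
end

section
/- The ℤ-linear map ē : ℤ[C] → Ĉ from the free abelian group on the underlying set of C to Ĉ, defined on basis elements by sending c ∈ C to e(c), is injective. -/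
open scoped TensorProduct

/-- `ē : ℤ[C] → Ĉ`, the ℤ-linear map on the free abelian group on the underlying set of `C`
(realized as finitely supported functions `C →₀ ℤ`) sending the basis element `c` to `e(c)`. -/
noncomputable def eBar (C : Type) [AddCommGroup C] [Module ℤ C] :
    (C →₀ ℤ) →ₗ[ℤ] Chat C :=
  Finsupp.linearCombination ℤ (eMap C)

/-!
Let `x ∈ ℤ[C]` with `ē x = 0`. Since `C` is free, some additive map `f : C → ℚ` is injective on
the finite support of `x` (the functionals identifying two given distinct points form a proper
subspace of the `ℚ`-vector space `Hom(C, ℚ)`, and finitely many proper subspaces cannot cover it).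
Applying `f ⊗ ⋯ ⊗ f` to the `n`-th component of `ē x` gives `∑_c x_c f(c)ⁿ = 0` for every `n`,
and since the `f(c)` are distinct, the Vandermonde determinant forces all `x_c = 0`.
-/

theorem Finset.eq_zero_of_forall_sum_mul_pow_eq_zero {R ι : Type*} [CommRing R] [IsDomain R]
    {s : Finset ι} {y : ι → R} (hy : Set.InjOn y s) {g : ι → R}
    (h : ∀ n : ℕ, ∑ i ∈ s, g i * y i ^ n = 0) : ∀ i ∈ s, g i = 0 := by
  let e := s.equivFin
  have hv : (fun j => g (e.symm j)) = 0 := by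
    refine Matrix.eq_zero_of_forall_pow_sum_mul_pow_eq_zero (f := fun j => y (e.symm j))
      (fun j k hjk => e.symm.injective (Subtype.ext (hy (e.symm j).2 (e.symm k).2 hjk)))
      fun n => ?_
    rw [← h n, ← s.sum_coe_sort]
    exact e.symm.sum_comp (fun i : s => g i * y i ^ (n : ℕ))
  intro i hi
  simpa [e] using congrFun hv (e ⟨i, hi⟩)

theorem Module.Projective.exists_linearMap_injOn (R K : Type*) {M : Type*} [CommRing R]
    [Field K] [Infinite K] [Algebra R K] [FaithfulSMul R K] [AddCommGroup M] [Module R M]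
    [Module.Projective R M] (s : Finset M) : ∃ f : M →ₗ[R] K, Set.InjOn f s := by
  by_contra! hs
  let W : s.offDiag → Subspace K (M →ₗ[R] K) := fun p =>
    LinearMap.ker (LinearMap.applyₗ' K ((p : M × M).1 - (p : M × M).2))
  have hcover : ⋃ p, (W p : Set (M →ₗ[R] K)) = Set.univ := by
    refine Set.eq_univ_of_forall fun f => ?_
    have hf := hs f
    simp only [Set.InjOn, not_forall, exists_prop] at hf
    obtain ⟨a, ha, b, hb, hfab, hab⟩ := hf
    exact Set.mem_iUnion.2 ⟨⟨(a, b), Finset.mem_offDiag.2 ⟨ha, hb, hab⟩⟩, by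
      simp [W, hfab]⟩
  obtain ⟨⟨p, hp⟩, htop⟩ := Subspace.exists_eq_top_of_iUnion_eq_univ hcover
  obtain ⟨φ, hφ⟩ := Module.Projective.exists_dual_ne_zero R
    (sub_ne_zero.2 (Finset.mem_offDiag.1 hp).2.2)
  have hmem : Algebra.linearMap R K ∘ₗ φ ∈ W ⟨p, hp⟩ := htop ▸ Submodule.mem_top
  exact hφ (FaithfulSMul.algebraMap_injective R K (by simpa [W] using hmem))

namespace TensorPower

variable {R M A : Type*} [CommSemiring R] [AddCommMonoid M] [Module R M] [CommSemiring A]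
  [Algebra R A]

noncomputable def prodLift (f : M →ₗ[R] A) (n : ℕ) : ⨂[R]^n M →ₗ[R] A :=
  PiTensorProduct.lift ((MultilinearMap.mkPiAlgebra R (Fin n) A).compLinearMap fun _ => f)

@[simp]
theorem prodLift_tprod (f : M →ₗ[R] A) {n : ℕ} (v : Fin n → M) :
    prodLift f n (PiTensorProduct.tprod R v) = ∏ i, f (v i) := by
  simp [prodLift]

end TensorPower

section chatEval

variable {C : Type} [AddCommGroup C] [Module ℤ C] (f : C →ₗ[ℤ] ℚ)

noncomputable def chatEval : ℕ → Chat C →ₗ[ℤ] ℚ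
  | 0 => Algebra.linearMap ℤ ℚ ∘ₗ LinearMap.fst ℤ ℤ _
  | n + 1 => TensorPower.prodLift f (n + 1) ∘ₗ LinearMap.proj n.succPNat ∘ₗ
      LinearMap.snd ℤ ℤ _

theorem chatEval_eMap (n : ℕ) (c : C) : chatEval f n (eMap C c) = f c ^ n := by
  cases n with
  | zero => simp [chatEval, eMap]
  | succ n =>
    exact (TensorPower.prodLift_tprod f fun _ : Fin (n + 1) => c).trans (Fin.prod_const _ _)

theorem chatEval_eBar (n : ℕ) (x : C →₀ ℤ) :
    chatEval f n (eBar C x) = ∑ c ∈ x.support, (x c : ℚ) * f c ^ n := by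
  simp [eBar, Finsupp.linearCombination_apply, Finsupp.sum, chatEval_eMap, zsmul_eq_mul]

end chatEval

/-- If `C` is a free abelian group, the map `ē : ℤ[C] → Ĉ` is injective. -/
theorem stmt1 (C : Type) [AddCommGroup C] [Module ℤ C] [Module.Free ℤ C] :
    Function.Injective ⇑(eBar C) := by
  rw [← LinearMap.ker_eq_bot, LinearMap.ker_eq_bot']
  intro x hx
  obtain ⟨f, hf⟩ := Module.Projective.exists_linearMap_injOn ℤ ℚ x.support
  have hmoments (n : ℕ) : ∑ c ∈ x.support, (x c : ℚ) * f c ^ n = 0 := by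
    rw [← chatEval_eBar, hx, map_zero]
  ext c
  by_cases hc : c ∈ x.support
  · exact_mod_cast Finset.eq_zero_of_forall_sum_mul_pow_eq_zero hf hmoments c hc
  · exact Finsupp.notMem_support_iff.1 hc
end

section
/- Let V be a vector space over ℚ and let t > 1 be an integer. For any distinct nonzero vectors v₁, …, v_t ∈ V, the vectors wᵢ = (1, vᵢ, vᵢ^{⊗2}, …, vᵢ^{⊗(t−1)}) in the direct sum ⊕_{j=0}^{t−1} V^{⊗j} are linearly independent over ℚ. -/
open scoped TensorProduct

/-
A linear functional `f` separating the `vᵢ` induces functionals `x₁ ⊗ ⋯ ⊗ xⱼ ↦ ∏ f xₖ` on the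
tensor powers; together they map `wᵢ` to the row `(1, f vᵢ, …, f vᵢ ^ (t - 1))` of a Vandermonde
matrix with distinct nodes, whose rows are linearly independent. Such an `f` exists because a
vector space over an infinite field is not a finite union of proper subspaces.
-/

namespace Module.Dual

variable {R M : Type*} [CommSemiring R] [AddCommMonoid M] [Module R M]

noncomputable def tensorPower (f : Dual R M) (n : ℕ) : Dual R (⨂[R]^n M) :=
  PiTensorProduct.lift ((MultilinearMap.mkPiAlgebra R (Fin n) R).compLinearMap fun _ => f)

theorem tensorPower_tprod (f : Dual R M) (n : ℕ) (x : Fin n → M) :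
    f.tensorPower n (PiTensorProduct.tprod R x) = ∏ k, f (x k) := by
  simp [tensorPower]

theorem tensorPower_tprod_const (f : Dual R M) (n : ℕ) (x : M) :
    f.tensorPower n (PiTensorProduct.tprod R fun _ : Fin n => x) = f x ^ n := by
  simp [tensorPower_tprod]

end Module.Dual

theorem Module.Dual.exists_injective_comp {K V ι : Type*} [Field K] [Infinite K]
    [AddCommGroup V] [Module K V] [Finite ι] {v : ι → V} (hv : Function.Injective v) :
    ∃ f : Dual K V, Function.Injective (f ∘ v) := by
  let kernel (q : {q : ι × ι // q.1 ≠ q.2}) : Subspace K (Dual K V) :=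
    LinearMap.ker (Dual.eval K V (v q.1.1 - v q.1.2))
  have kernel_ne_top (q) : kernel q ≠ ⊤ := by
    intro hq
    have hsub : v q.1.1 - v q.1.2 ≠ 0 := sub_ne_zero.mpr fun h => q.2 (hv h)
    refine hsub ((forall_dual_apply_eq_zero_iff K _).mp fun φ => ?_)
    simpa [kernel] using (hq ▸ Submodule.mem_top : φ ∈ kernel q)
  have hcover : ⋃ q, (kernel q : Set (Dual K V)) ≠ Set.univ := fun h =>
    (Subspace.exists_eq_top_of_iUnion_eq_univ h).elim kernel_ne_top
  obtain ⟨f, hf⟩ := Set.ne_univ_iff_exists_notMem _ |>.mp hcover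
  refine ⟨f, fun i k hik => ?_⟩
  by_contra hik'
  refine hf (Set.mem_iUnion.mpr ⟨⟨(i, k), hik'⟩, ?_⟩)
  simpa [kernel, sub_eq_zero] using hik

theorem linearIndependent_tprod_pow {K V : Type*} [Field K] [Infinite K] [AddCommGroup V]
    [Module K V] {n : ℕ} {v : Fin n → V} (hv : Function.Injective v) :
    LinearIndependent K fun i (j : Fin n) =>
      (PiTensorProduct.tprod K fun _ : Fin j => v i : ⨂[K]^(j : ℕ) V) := by
  obtain ⟨f, hf⟩ := Module.Dual.exists_injective_comp (K := K) hv
  let evalPowers : (Π j : Fin n, ⨂[K]^(j : ℕ) V) →ₗ[K] Fin n → K :=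
    LinearMap.pi fun j => (f.tensorPower j).comp (LinearMap.proj j)
  refine LinearIndependent.of_comp evalPowers ?_
  have hrows : (evalPowers ∘ fun i (j : Fin n) => PiTensorProduct.tprod K fun _ : Fin j => v i) =
      (Matrix.vandermonde (f ∘ v)).row := by
    ext i j
    simp [evalPowers, Matrix.vandermonde, Module.Dual.tensorPower_tprod_const]
  rw [hrows, Matrix.linearIndependent_rows_iff_isUnit, Matrix.isUnit_iff_isUnit_det]
  exact (Matrix.det_vandermonde_ne_zero_iff.mpr hf).isUnit

theorem stmt2_general (V : Type) [AddCommGroup V] [Module ℚ V]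
    (t : ℕ) (v : Fin t → V)
    (hdist : Function.Injective v) :
    LinearIndependent ℚ
      (fun i : Fin t =>
        (fun j : Fin t => PiTensorProduct.tprod ℚ (fun _ : Fin (j : ℕ) => v i) :
          Π j : Fin t, TensorPower ℚ (j : ℕ) V)) :=
  linearIndependent_tprod_pow hdist

/-- Let `V` be a vector space over `ℚ` and `t > 1`. For distinct nonzero vectors
`v₁, …, v_t ∈ V`, the vectors `wᵢ = (1, vᵢ, vᵢ^{⊗2}, …, vᵢ^{⊗(t−1)})` in the direct sum
`⊕_{j=0}^{t−1} V^{⊗j}` are linearly independent over `ℚ`. -/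
theorem stmt2 (V : Type) [AddCommGroup V] [Module ℚ V]
    (t : ℕ) (ht : 1 < t) (v : Fin t → V)
    (hdist : Function.Injective v) (hne : ∀ i, v i ≠ 0) :
    LinearIndependent ℚ
      (fun i : Fin t =>
        (fun j : Fin t => PiTensorProduct.tprod ℚ (fun _ : Fin (j : ℕ) => v i) :
          Π j : Fin t, TensorPower ℚ (j : ℕ) V)) :=
  stmt2_general V t v hdist
end

section
/- Let t > 1 be an integer and let p₁, …, p_t be distinct nonzero homogeneous polynomials of degree 1 (i.e., distinct nonzero ℚ-linear combinations of the variables) in a polynomial ring ℚ[X₁, X₂, …] over ℚ. Then the polynomials qᵢ = ∑_{j=0}^{t−1} pᵢ^j, for i = 1, …, t, are linearly independent over ℚ. -/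
/-!
Since each `pᵢ` is homogeneous of degree 1, the degree-`d` homogeneous component of
`qᵢ = ∑_{j<t} pᵢ^j` is `pᵢ^d`. A linear relation `∑ gᵢ qᵢ = 0` therefore splits into the
relations `∑ gᵢ pᵢ^d = 0` for all `d < t`. Evaluating at a point where the `pᵢ` take pairwise
distinct values turns these into a Vandermonde system, whose only solution is `g = 0`.
-/

namespace MvPolynomial

variable {σ R : Type*}

theorem homogeneousComponent_sum_range_pow [CommSemiring R] {p : MvPolynomial σ R}
    (hp : p.IsHomogeneous 1) {d n : ℕ} (hd : d < n) :
    homogeneousComponent d (∑ j ∈ Finset.range n, p ^ j) = p ^ d := by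
  have hpow : ∀ j, homogeneousComponent d (p ^ j) = if d = j then p ^ j else 0 := fun j =>
    homogeneousComponent_of_mem (by simpa using hp.pow j)
  simp [map_sum, hpow, hd]

theorem exists_eval_ne_zero [CommRing R] [IsDomain R] [Infinite R] {f : MvPolynomial σ R}
    (hf : f ≠ 0) : ∃ x : σ → R, eval x f ≠ 0 := by
  by_contra! h
  exact hf (MvPolynomial.funext (by simpa using h))

theorem exists_injective_eval [CommRing R] [IsDomain R] [Infinite R] {ι : Type*} [Fintype ι]
    [DecidableEq ι] {p : ι → MvPolynomial σ R} (hp : Function.Injective p) :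
    ∃ x : σ → R, Function.Injective fun i => eval x (p i) := by
  obtain ⟨x, hx⟩ := exists_eval_ne_zero (f := ∏ ij ∈ Finset.univ.offDiag, (p ij.1 - p ij.2))
    (Finset.prod_ne_zero_iff.mpr fun ij hij =>
      sub_ne_zero.mpr (hp.ne (Finset.mem_offDiag.mp hij).2.2))
  refine ⟨x, fun i j hij => by_contra fun hne => hx ?_⟩
  rw [map_prod]
  exact Finset.prod_eq_zero (i := (i, j)) (by simpa using hne) (by simpa [sub_eq_zero] using hij)

theorem eq_zero_of_forall_sum_smul_pow_eq_zero [CommRing R] [IsDomain R] [Infinite R] {n : ℕ}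
    {p : Fin n → MvPolynomial σ R} (hp : Function.Injective p) {g : Fin n → R}
    (h : ∀ d : Fin n, ∑ i, g i • p i ^ (d : ℕ) = 0) : g = 0 := by
  obtain ⟨x, hx⟩ := exists_injective_eval hp
  refine Matrix.eq_zero_of_forall_pow_sum_mul_pow_eq_zero hx fun d => ?_
  simpa [smul_eval] using congrArg (eval x) (h d)

end MvPolynomial

theorem stmt3_general (σ : Type) (t : ℕ)
    (p : Fin t → MvPolynomial σ ℚ)
    (hhom : ∀ i, (p i).IsHomogeneous 1)
    (hdist : Function.Injective p) :
    LinearIndependent ℚ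
      (fun i : Fin t => ∑ j ∈ Finset.range t, (p i) ^ j) := by
  rw [Fintype.linearIndependent_iff]
  intro g hg
  refine congrFun (MvPolynomial.eq_zero_of_forall_sum_smul_pow_eq_zero hdist fun d => ?_)
  simpa [map_sum, MvPolynomial.homogeneousComponent_sum_range_pow (hhom _) d.isLt]
    using congrArg (MvPolynomial.homogeneousComponent (d : ℕ)) hg

/-- Let `t > 1` and let `p₁, …, p_t` be distinct nonzero homogeneous polynomials of degree 1
in a polynomial ring `ℚ[X₁, X₂, …]` over `ℚ` (in a possibly infinite family `σ` of
indeterminates).  Then the polynomials `qᵢ = ∑_{j=0}^{t−1} pᵢ^j` for `i = 1, …, t` are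
linearly independent over `ℚ`. -/
theorem stmt3 (σ : Type) (t : ℕ) (ht : 1 < t)
    (p : Fin t → MvPolynomial σ ℚ)
    (hhom : ∀ i, (p i).IsHomogeneous 1)
    (hne : ∀ i, p i ≠ 0)
    (hdist : Function.Injective p) :
    LinearIndependent ℚ
      (fun i : Fin t => ∑ j ∈ Finset.range t, (p i) ^ j) :=
  stmt3_general σ t p hhom hdist
end
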